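/- Product-to-sum exponential bound: for n×n complex matrices X_1,…,X_k with ‖X_m‖ ≤ M for all m and pairwise commutator norms ‖[X_m, X_{m'}]‖ ≤ η, there is a constant C(M,k) such that ‖exp(X_1)⋯exp(X_k) − exp(X_1 + ⋯ + X_k)‖ ≤ C(M,k)·η. In particular the difference vanishes when all X_m pairwise commute. -/

import Mathlib

open scoped Matrix.Norms.L2Operator
open NormedSpace Set

/-!
Both `f t = exp (t • A) * exp (t • B) - exp (t • (A + B))` and `g t = [exp (t • A), B]` vanish
at `t = 0` and satisfy linear differential equations
`f' = (A + B) * f + g * exp (t • B)` and `g' = A * g + [A, B] * exp (t • A)`,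
so Grönwall's inequality bounds first `g` and then `f` by a multiple of `‖[A, B]‖`.
For `k` factors, split off the first one: `exp X₀ * P - exp (X₀ + S)` is
`exp X₀ * (P - exp S)`, bounded by induction, plus `exp X₀ * exp S - exp (X₀ + S)`, bounded by
the two-factor case since `‖[X₀, S]‖ ≤ (k - 1) η`. The commuting case is the case `η = 0`.
-/

theorem gronwallBound_zero_le_mul_exp {K ε : ℝ} (hK : 0 ≤ K) (hε : 0 ≤ ε) :
    gronwallBound 0 K ε 1 ≤ ε * Real.exp K := by
  rcases hK.eq_or_lt with rfl | hK
  · simp [gronwallBound_K0]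
  · have h := Real.add_one_le_exp (-K)
    rw [Real.exp_neg] at h
    have hexp : Real.exp K - 1 ≤ K * Real.exp K := by
      have := mul_le_mul_of_nonneg_right h (Real.exp_pos K).le
      rw [inv_mul_cancel₀ (Real.exp_pos K).ne'] at this
      linarith
    rw [gronwallBound_of_K_ne_0 hK.ne']
    simp only [mul_one, zero_mul, zero_add]
    rw [div_mul_eq_mul_div, div_le_iff₀ hK]
    nlinarith

theorem norm_le_mul_exp_of_norm_deriv_le {E : Type*} [NormedAddCommGroup E] [NormedSpace ℝ E]
    {f f' : ℝ → E} {K ε : ℝ} (hf : ∀ t, HasDerivAt f (f' t) t) (h0 : f 0 = 0) (hK : 0 ≤ K)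
    (hbound : ∀ t ∈ Ico (0 : ℝ) 1, ‖f' t‖ ≤ K * ‖f t‖ + ε) :
    ‖f 1‖ ≤ ε * Real.exp K := by
  have hε : 0 ≤ ε := by
    simpa [h0] using (norm_nonneg _).trans (hbound 0 (by norm_num))
  have hgronwall := norm_le_gronwallBound_of_norm_deriv_right_le
    (fun t _ => (hf t).continuousAt.continuousWithinAt) (fun t _ => (hf t).hasDerivWithinAt)
    (by rw [h0, norm_zero]) hbound 1 (by norm_num)
  rw [sub_zero] at hgronwall
  exact hgronwall.trans (gronwallBound_zero_le_mul_exp hK hε)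

theorem norm_smul_le_of_mem_Icc {E : Type*} [SeminormedAddCommGroup E] [NormedSpace ℝ E]
    {t : ℝ} (ht : t ∈ Icc (0 : ℝ) 1) (x : E) : ‖t • x‖ ≤ ‖x‖ := by
  rw [norm_smul, Real.norm_of_nonneg ht.1]
  exact mul_le_of_le_one_left (norm_nonneg x) ht.2

section

variable {𝔸 : Type*} [NormedRing 𝔸] [NormedAlgebra ℝ 𝔸] [NormOneClass 𝔸] [CompleteSpace 𝔸]

theorem norm_exp_le (x : 𝔸) : ‖exp x‖ ≤ Real.exp ‖x‖ := by
  refine (exp_series_hasSum_exp' (𝕂 := ℝ) x).norm_le_of_bounded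
    (Real.exp_eq_exp_ℝ ▸ expSeries_div_hasSum_exp ‖x‖) fun n => ?_
  rw [norm_smul, norm_inv, RCLike.norm_natCast, inv_mul_eq_div]
  gcongr
  exact norm_pow_le x n

theorem norm_exp_smul_le {t : ℝ} (ht : t ∈ Icc (0 : ℝ) 1) (x : 𝔸) :
    ‖exp (t • x)‖ ≤ Real.exp ‖x‖ :=
  (norm_exp_le _).trans (Real.exp_le_exp.2 (norm_smul_le_of_mem_Icc ht x))

theorem norm_exp_mul_sub_mul_exp_le (A B : 𝔸) :
    ‖exp A * B - B * exp A‖ ≤ Real.exp (2 * ‖A‖) * ‖A * B - B * A‖ := by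
  set f : ℝ → 𝔸 := fun t => exp (t • A) * B - B * exp (t • A)
  have hf : ∀ t, HasDerivAt f (A * f t + (A * B - B * A) * exp (t • A)) t := fun t =>
    (((hasDerivAt_exp_smul_const' A t).mul_const B).sub
      ((hasDerivAt_exp_smul_const' A t).const_mul B)).congr_deriv (by simp only [f]; noncomm_ring)
  have hbound : ∀ t ∈ Ico (0 : ℝ) 1, ‖A * f t + (A * B - B * A) * exp (t • A)‖ ≤
      ‖A‖ * ‖f t‖ + ‖A * B - B * A‖ * Real.exp ‖A‖ := fun t ht =>
    (norm_add_le _ _).trans (add_le_add (norm_mul_le _ _)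
      ((norm_mul_le _ _).trans (by gcongr; exact norm_exp_smul_le (Ico_subset_Icc_self ht) A)))
  have := norm_le_mul_exp_of_norm_deriv_le hf (by simp [f]) (norm_nonneg A) hbound
  simp only [f, one_smul] at this
  rw [two_mul, Real.exp_add]
  exact this.trans_eq (by ring)

theorem norm_exp_smul_mul_sub_mul_exp_smul_le {t : ℝ} (ht : t ∈ Icc (0 : ℝ) 1) (A B : 𝔸) :
    ‖exp (t • A) * B - B * exp (t • A)‖ ≤ Real.exp (2 * ‖A‖) * ‖A * B - B * A‖ := by
  have hcomm : t • A * B - B * (t • A) = t • (A * B - B * A) := by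
    rw [smul_mul_assoc, mul_smul_comm, smul_sub]
  calc ‖exp (t • A) * B - B * exp (t • A)‖
      ≤ Real.exp (2 * ‖t • A‖) * ‖t • (A * B - B * A)‖ :=
        hcomm ▸ norm_exp_mul_sub_mul_exp_le (t • A) B
    _ ≤ Real.exp (2 * ‖A‖) * ‖A * B - B * A‖ := by
        gcongr <;> exact norm_smul_le_of_mem_Icc ht _

theorem norm_exp_mul_exp_sub_exp_add_le (A B : 𝔸) :
    ‖exp A * exp B - exp (A + B)‖ ≤ Real.exp (3 * ‖A‖ + 2 * ‖B‖) * ‖A * B - B * A‖ := by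
  set f : ℝ → 𝔸 := fun t => exp (t • A) * exp (t • B) - exp (t • (A + B))
  have hf : ∀ t, HasDerivAt f
      ((A + B) * f t + (exp (t • A) * B - B * exp (t • A)) * exp (t • B)) t := fun t =>
    (((hasDerivAt_exp_smul_const' A t).mul (hasDerivAt_exp_smul_const' B t)).sub
      (hasDerivAt_exp_smul_const' (A + B) t)).congr_deriv (by simp only [f]; noncomm_ring)
  have hbound : ∀ t ∈ Ico (0 : ℝ) 1,
      ‖(A + B) * f t + (exp (t • A) * B - B * exp (t • A)) * exp (t • B)‖ ≤
        (‖A‖ + ‖B‖) * ‖f t‖ + Real.exp (2 * ‖A‖) * ‖A * B - B * A‖ * Real.exp ‖B‖ := by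
    intro t ht
    have ht' := Ico_subset_Icc_self ht
    refine (norm_add_le _ _).trans (add_le_add ((norm_mul_le _ _).trans ?_)
      ((norm_mul_le _ _).trans ?_))
    · gcongr
      exact norm_add_le A B
    · gcongr
      · exact norm_exp_smul_mul_sub_mul_exp_smul_le ht' A B
      · exact norm_exp_smul_le ht' B
  have := norm_le_mul_exp_of_norm_deriv_le hf (by simp [f]) (by positivity) hbound
  simp only [f, one_smul] at this
  have hexp : Real.exp (3 * ‖A‖ + 2 * ‖B‖) =
      Real.exp (2 * ‖A‖) * Real.exp ‖B‖ * Real.exp (‖A‖ + ‖B‖) := by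
    rw [← Real.exp_add, ← Real.exp_add]
    ring_nf
  rw [hexp]
  exact this.trans_eq (by ring)

theorem norm_list_sum_le_length_mul {E : Type*} [SeminormedAddCommGroup E] {M : ℝ} :
    ∀ (l : List E), (∀ x ∈ l, ‖x‖ ≤ M) → ‖l.sum‖ ≤ l.length * M
  | [], _ => by simp
  | x :: l, hM => by
    rw [List.sum_cons, List.length_cons, Nat.cast_succ, add_comm _ (1 : ℝ), one_add_mul]
    exact (norm_add_le _ _).trans (add_le_add (hM x List.mem_cons_self)
      (norm_list_sum_le_length_mul l fun y hy => hM y (List.mem_cons_of_mem x hy)))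

theorem norm_mul_list_sum_sub_list_sum_mul_le {R : Type*} [NonUnitalSeminormedRing R] {η : ℝ}
    (a : R) : ∀ (l : List R), (∀ y ∈ l, ‖a * y - y * a‖ ≤ η) →
      ‖a * l.sum - l.sum * a‖ ≤ l.length * η
  | [], _ => by simp
  | y :: l, hη => by
    have hsplit : a * (y :: l).sum - (y :: l).sum * a =
        (a * y - y * a) + (a * l.sum - l.sum * a) := by
      rw [List.sum_cons]; noncomm_ring
    rw [hsplit, List.length_cons, Nat.cast_succ, add_comm _ (1 : ℝ), one_add_mul]
    exact (norm_add_le _ _).trans (add_le_add (hη y List.mem_cons_self)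
      (norm_mul_list_sum_sub_list_sum_mul_le a l fun z hz => hη z (List.mem_cons_of_mem y hz)))

theorem norm_prod_map_exp_sub_exp_sum_le {M η : ℝ} :
    ∀ (L : List 𝔸), (∀ x ∈ L, ‖x‖ ≤ M) → (∀ x ∈ L, ∀ y ∈ L, ‖x * y - y * x‖ ≤ η) →
      ‖(L.map exp).prod - exp L.sum‖ ≤ L.length ^ 2 * Real.exp (3 * L.length * M) * η
  | [], _, _ => by simp
  | a :: l, hM, hη => by
    have hMl : ∀ x ∈ l, ‖x‖ ≤ M := fun x hx => hM x (List.mem_cons_of_mem a hx)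
    have ha : ‖a‖ ≤ M := hM a List.mem_cons_self
    have hM0 : 0 ≤ M := (norm_nonneg a).trans ha
    have hη0 : 0 ≤ η := by simpa using hη a List.mem_cons_self a List.mem_cons_self
    have ih := norm_prod_map_exp_sub_exp_sum_le l hMl
      fun x hx y hy => hη x (List.mem_cons_of_mem a hx) y (List.mem_cons_of_mem a hy)
    have hS : ‖l.sum‖ ≤ l.length * M := norm_list_sum_le_length_mul l hMl
    have hcomm : ‖a * l.sum - l.sum * a‖ ≤ l.length * η :=
      norm_mul_list_sum_sub_list_sum_mul_le a l
        fun y hy => hη a List.mem_cons_self y (List.mem_cons_of_mem a hy)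
    set k : ℝ := (l.length : ℝ)
    have hk : 0 ≤ k := Nat.cast_nonneg _
    set E : ℝ := Real.exp (3 * (k + 1) * M)
    have hE₁ : Real.exp ‖a‖ * Real.exp (3 * k * M) ≤ E := by
      rw [← Real.exp_add]; exact Real.exp_le_exp.2 (by nlinarith)
    have hE₂ : Real.exp (3 * ‖a‖ + 2 * ‖l.sum‖) ≤ E :=
      Real.exp_le_exp.2 (by nlinarith [mul_nonneg hk hM0])
    simp only [List.map_cons, List.prod_cons, List.sum_cons, List.length_cons, Nat.cast_succ]
    calc ‖exp a * (l.map exp).prod - exp (a + l.sum)‖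
        ≤ ‖exp a * ((l.map exp).prod - exp l.sum)‖ + ‖exp a * exp l.sum - exp (a + l.sum)‖ := by
          rw [mul_sub]; exact norm_sub_le_norm_sub_add_norm_sub _ _ _
      _ ≤ Real.exp ‖a‖ * (k ^ 2 * Real.exp (3 * k * M) * η) +
            Real.exp (3 * ‖a‖ + 2 * ‖l.sum‖) * (k * η) := by
          gcongr
          · exact (norm_mul_le _ _).trans (by gcongr; exact norm_exp_le a)
          · exact (norm_exp_mul_exp_sub_exp_add_le a l.sum).trans (by gcongr)
      _ ≤ k ^ 2 * E * η + k * E * η := by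
          nlinarith [mul_nonneg (mul_nonneg (sq_nonneg k) hη0) (sub_nonneg.2 hE₁),
            mul_nonneg (mul_nonneg hk hη0) (sub_nonneg.2 hE₂)]
      _ ≤ (k + 1) ^ 2 * E * η := by
          have : 0 ≤ E * η := mul_nonneg (Real.exp_pos _).le hη0
          nlinarith

theorem norm_prod_ofFn_exp_sub_exp_sum_le {k : ℕ} {M η : ℝ} (X : Fin k → 𝔸)
    (hM : ∀ m, ‖X m‖ ≤ M) (hη : ∀ m m', ‖X m * X m' - X m' * X m‖ ≤ η) :
    ‖(List.ofFn fun m => exp (X m)).prod - exp (∑ m, X m)‖ ≤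
      k ^ 2 * Real.exp (3 * k * M) * η := by
  have h := norm_prod_map_exp_sub_exp_sum_le (List.ofFn X)
    (List.forall_mem_ofFn_iff.2 hM)
    (List.forall_mem_ofFn_iff.2 fun m => List.forall_mem_ofFn_iff.2 (hη m))
  rwa [List.map_ofFn, List.sum_ofFn, List.length_ofFn] at h

end

theorem Matrix.norm_prod_ofFn_exp_sub_exp_sum_le {n k : ℕ} {M η : ℝ} (hη₀ : 0 ≤ η)
    (X : Fin k → Matrix (Fin n) (Fin n) ℂ)
    (hM : ∀ m, ‖X m‖ ≤ M) (hη : ∀ m m', ‖X m * X m' - X m' * X m‖ ≤ η) :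
    ‖(List.ofFn fun m => exp (X m)).prod - exp (∑ m, X m)‖ ≤
      k ^ 2 * Real.exp (3 * k * M) * η := by
  rcases isEmpty_or_nonempty (Fin n) with _ | _
  -- The matrices of size 0 form the zero ring, which is not a `NormOneClass`.
  · rw [Subsingleton.elim (_ - _) 0, norm_zero]
    positivity
  · exact _root_.norm_prod_ofFn_exp_sub_exp_sum_le X hM hη

theorem product_to_sum_exponential_bound (n k : ℕ) (M : ℝ) :
    (∃ C > 0, ∀ η ≥ (0:ℝ), ∀ X : Fin k → Matrix (Fin n) (Fin n) ℂ,
      (∀ m, ‖X m‖ ≤ M) →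
      (∀ m m', ‖X m * X m' - X m' * X m‖ ≤ η) →
      ‖(List.ofFn fun m => NormedSpace.exp (X m)).prod -
          NormedSpace.exp (∑ m, X m)‖ ≤ C * η) ∧
    (∀ X : Fin k → Matrix (Fin n) (Fin n) ℂ,
      (∀ m m', Commute (X m) (X m')) →
      (List.ofFn fun m => NormedSpace.exp (X m)).prod =
        NormedSpace.exp (∑ m, X m)) := by
  refine ⟨⟨k ^ 2 * Real.exp (3 * k * M) + 1, by positivity, fun η hη X hM hc => ?_⟩,
    fun X hc => ?_⟩
  · exact (Matrix.norm_prod_ofFn_exp_sub_exp_sum_le hη X hM hc).trans (by gcongr; linarith)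
  · have h := Matrix.norm_prod_ofFn_exp_sub_exp_sum_le le_rfl X
      (fun m => Finset.single_le_sum (fun i _ => norm_nonneg (X i)) (Finset.mem_univ m))
      (fun m m' => by rw [(hc m m').eq, sub_self, norm_zero])
    rwa [mul_zero, norm_le_zero_iff, sub_eq_zero] at h
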